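/- arXiv:1408.2909 — 2 statements merged into one kernel-verified Lean document; each statement's English description precedes it below -/
import Mathlib

section
/- Let $H \in C^1(\mathbb{T}^n \times \mathbb{R}^n)$ satisfy $|D_x H(x,p)| \le C_0(1 + |H(x,p)|)$ for all $(x,p)$, let $w : \mathbb{T}^n \to \mathbb{R}$ be Lipschitz with $\|Dw\|_\infty \le M$, convex in $p$, and let $w^\eta = \gamma^\eta * w$ be the mollification of $w$ with a standard mollifier supported in $\bar B(0,\eta)$. Then there is a constant $C > 0$, depending only on $C_0$, $M$, and $\sup_{x, |p|\le M}|H(x,p)|$, such that for all $x$ and all $0 < \eta \le 1$: $H(x, Dw^\eta(x)) \le \int_{\mathbb{R}^n} \gamma^\eta(y)\, H(x+y, Dw(x+y))\, dy + C\eta$. -/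
open MeasureTheory
open scoped RealInnerProductSpace

set_option maxHeartbeats 1000000

noncomputable section

def ZnPeriodic {n : ℕ} {α : Type*} (f : EuclideanSpace ℝ (Fin n) → α) : Prop :=
  ∀ (x : EuclideanSpace ℝ (Fin n)) (k : Fin n → ℤ),
    f (x + (WithLp.equiv 2 (Fin n → ℝ)).symm fun i => (k i : ℝ)) = f x

/-- rescaled mollifier `γ^η(y) = η^{-n} γ(y/η)` -/
def moll {n : ℕ} (γ : EuclideanSpace ℝ (Fin n) → ℝ) (η : ℝ)
    (y : EuclideanSpace ℝ (Fin n)) : ℝ := η ^ (-(n : ℤ)) * γ (η⁻¹ • y)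

/-- mollification `f^η = γ^η * f`, `f^η(x) = ∫ γ^η(y) f(x+y) dy` -/
def mollify {n : ℕ} (γ : EuclideanSpace ℝ (Fin n) → ℝ) (η : ℝ)
    (f : EuclideanSpace ℝ (Fin n) → ℝ) (x : EuclideanSpace ℝ (Fin n)) : ℝ :=
  ∫ y, moll γ η y * f (x + y)

lemma convex_subgrad {E : Type*} [NormedAddCommGroup E] [NormedSpace ℝ E]
    {f : E → ℝ} (hf : ConvexOn ℝ Set.univ f) {q : E} {f' : E →L[ℝ] ℝ}
    (hd : HasFDerivAt f f' q) (p : E) : f q + f' (p - q) ≤ f p := by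
  have hg : ConvexOn ℝ Set.univ fun t : ℝ => f (AffineMap.lineMap q p t) := by
    exact hf.comp_affineMap (AffineMap.lineMap q p)
  have hl : HasDerivAt (fun t : ℝ => AffineMap.lineMap q p t) (p - q) (0 : ℝ) := by
    simp only [AffineMap.lineMap_apply_module]
    have h1 : HasDerivAt (fun t : ℝ => (1 - t) • q + t • p) ((-1 : ℝ) • q + (1 : ℝ) • p) 0 :=
      ((((hasDerivAt_id (0 : ℝ)).const_sub 1).smul_const q)).add
        ((hasDerivAt_id (0 : ℝ)).smul_const p)
    have h2 : ((-1 : ℝ) • q + (1 : ℝ) • p) = p - q := by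
      simp [neg_smul, one_smul]; abel
    rwa [h2] at h1
  have hd0 : HasDerivAt (fun t : ℝ => f (AffineMap.lineMap q p t)) (f' (p - q)) 0 := by
    have hd' : HasFDerivAt f f' ((fun t : ℝ => AffineMap.lineMap q p t) 0) := by simpa using hd
    exact hd'.comp_hasDerivAt 0 hl
  have hs := hg.le_slope_of_hasDerivWithinAt_Ioi (Set.mem_univ (0 : ℝ)) (Set.mem_univ 1)
    one_pos hd0.hasDerivWithinAt
  rw [slope_def_field] at hs
  simp only [AffineMap.lineMap_apply_one, AffineMap.lineMap_apply_zero] at hs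
  have : f' (p - q) ≤ f p - f q := by simpa using hs
  linarith

/-- estimate of `R₁^η` (Lemma 3.1). For `H ∈ C¹` with
`|D_x H| ≤ C₀(1+|H|)`, convex in `p`, and `w` Lipschitz with `‖Dw‖_∞ ≤ M`,
the mollifications satisfy
`H(x, Dw^η(x)) ≤ ∫ γ^η(y) H(x+y, Dw(x+y)) dy + Cη`. -/
theorem R1_estimate {n : ℕ}
    (H : EuclideanSpace ℝ (Fin n) → EuclideanSpace ℝ (Fin n) → ℝ)
    (hH : ContDiff ℝ 1 fun q : EuclideanSpace ℝ (Fin n) × EuclideanSpace ℝ (Fin n) =>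
      H q.1 q.2)
    (hHper : ∀ p, ZnPeriodic fun x => H x p)
    (hconv : ∀ x, ConvexOn ℝ Set.univ (H x))
    (C₀ : ℝ) (hC₀ : 0 < C₀)
    (hDxH : ∀ x p, ‖fderiv ℝ (fun x' => H x' p) x‖ ≤ C₀ * (1 + |H x p|))
    (w : EuclideanSpace ℝ (Fin n) → ℝ) (M : ℝ) (hM : 0 < M)
    (hwlip : LipschitzWith (Real.toNNReal M) w) (hwper : ZnPeriodic w)
    (hDw : ∀ y, ‖gradient w y‖ ≤ M)
    (γ : EuclideanSpace ℝ (Fin n) → ℝ)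
    (hγsm : ContDiff ℝ (⊤ : ℕ∞) γ) (hγpos : ∀ y, 0 ≤ γ y)
    (hγsupp : tsupport γ ⊆ Metric.closedBall 0 1) (hγint : ∫ y, γ y = 1) :
    ∃ C > 0, ∀ (x : EuclideanSpace ℝ (Fin n)) (η : ℝ), 0 < η → η ≤ 1 →
      H x (gradient (mollify γ η w) x)
        ≤ (∫ y, moll γ η y * H (x + y) (gradient w (x + y))) + C * η := by
  have hHcont : Continuous (fun q : EuclideanSpace ℝ (Fin n) × EuclideanSpace ℝ (Fin n) =>
    H q.1 q.2) := hH.continuous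
  -- global bound on `|H|` for `‖p‖ ≤ M`, via periodicity and compactness
  obtain ⟨K, hK0, hK⟩ : ∃ K, 0 ≤ K ∧
      ∀ z p : EuclideanSpace ℝ (Fin n), ‖p‖ ≤ M → |H z p| ≤ K := by
    obtain ⟨K₀, hK₀⟩ := (((isCompact_closedBall (0 : EuclideanSpace ℝ (Fin n)) (Real.sqrt n)).prod
      (isCompact_closedBall (0 : EuclideanSpace ℝ (Fin n)) M))).exists_bound_of_continuousOn
      hHcont.continuousOn
    refine ⟨max K₀ 0, le_max_right _ _, ?_⟩
    intro z p hp
    set z' : EuclideanSpace ℝ (Fin n) :=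
      z + (WithLp.equiv 2 (Fin n → ℝ)).symm (fun i => ((-⌊z i⌋ : ℤ) : ℝ)) with hz'
    have hper : H z' p = H z p := hHper p z (fun i => -⌊z i⌋)
    have hz'i : ∀ i, z' i = Int.fract (z i) := by
      intro i
      simp [hz', Int.fract, PiLp.toLp_apply, PiLp.add_apply, sub_eq_add_neg]
    have hz'norm : ‖z'‖ ≤ Real.sqrt n := by
      rw [EuclideanSpace.norm_eq]
      apply Real.sqrt_le_sqrt
      calc ∑ i, ‖z' i‖ ^ 2 ≤ ∑ _i : Fin n, (1 : ℝ) := by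
            apply Finset.sum_le_sum
            intro i _
            have h1 : 0 ≤ Int.fract (z i) := Int.fract_nonneg _
            have h2 : Int.fract (z i) < 1 := Int.fract_lt_one _
            rw [hz'i, Real.norm_eq_abs, abs_of_nonneg h1]
            nlinarith
        _ = (n : ℝ) := by simp
    have hb := hK₀ (z', p) ⟨by simpa [Metric.mem_closedBall, dist_zero_right] using hz'norm,
      by simpa [Metric.mem_closedBall, dist_zero_right] using hp⟩
    rw [Real.norm_eq_abs] at hb
    calc |H z p| = |H z' p| := by rw [hper]
      _ ≤ K₀ := hb
      _ ≤ max K₀ 0 := le_max_left _ _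
  -- Lipschitz estimate in the `x` variable
  have hHdiff : Differentiable ℝ (fun q : EuclideanSpace ℝ (Fin n) × EuclideanSpace ℝ (Fin n) =>
    H q.1 q.2) := hH.differentiable one_ne_zero
  have hdx : ∀ p : EuclideanSpace ℝ (Fin n), Differentiable ℝ (fun z => H z p) := fun p z =>
    (hHdiff (z, p)).comp (f := fun z' => (z', p)) z ((differentiable_id.prodMk (differentiable_const p)) z)
  have hshift : ∀ (z y p : EuclideanSpace ℝ (Fin n)), ‖p‖ ≤ M →
      |H (z + y) p - H z p| ≤ (C₀ * (1 + K)) * ‖y‖ := by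
    intro z y p hp
    have hb : ∀ u ∈ Set.univ, ‖fderiv ℝ (fun z' => H z' p) u‖ ≤ C₀ * (1 + K) := by
      intro u _
      refine (hDxH u p).trans ?_
      have := hK u p hp
      nlinarith
    have h1 := convex_univ.norm_image_sub_le_of_norm_fderiv_le
      (fun u _ => (hdx p).differentiableAt) hb (Set.mem_univ z) (Set.mem_univ (z + y))
    simpa [add_sub_cancel_left, Real.norm_eq_abs] using h1
  refine ⟨C₀ * (1 + K), mul_pos hC₀ (by linarith), ?_⟩
  intro x η hη hη1
  have hηn : (0:ℝ) < η ^ (-(n:ℤ)) := zpow_pos hη _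
  have hmoll_cont : Continuous (moll γ η) :=
    continuous_const.mul (hγsm.continuous.comp (continuous_const_smul η⁻¹))
  have hmoll_nonneg : ∀ y, 0 ≤ moll γ η y := fun y => mul_nonneg hηn.le (hγpos _)
  have hmoll_zero : ∀ y : EuclideanSpace ℝ (Fin n), η < ‖y‖ → moll γ η y = 0 := by
    intro y hy
    have hγ0 : γ (η⁻¹ • y) = 0 := by
      by_contra h
      have h2 := hγsupp (subset_tsupport γ h)
      rw [Metric.mem_closedBall, dist_zero_right, norm_smul, Real.norm_eq_abs,
        abs_of_pos (inv_pos.2 hη)] at h2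
      have h3 : ‖y‖ ≤ η := by
        have h4 := (inv_mul_le_iff₀ hη).mp h2
        simpa using h4
      linarith
    simp [moll, hγ0]
  have hmollCS : HasCompactSupport (moll γ η) :=
    HasCompactSupport.intro (isCompact_closedBall 0 η) (fun y hy => by
      apply hmoll_zero
      simpa [Metric.mem_closedBall, dist_zero_right, not_le] using hy)
  have hmoll_int : Integrable (moll γ η) := hmoll_cont.integrable_of_hasCompactSupport hmollCS
  have hmoll_one : ∫ y, moll γ η y = 1 := by
    have h1 : ∫ y : EuclideanSpace ℝ (Fin n), γ (η⁻¹ • y) = η ^ (n:ℕ) * ∫ y, γ y := by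
      rw [MeasureTheory.Measure.integral_comp_inv_smul_of_nonneg volume γ hη.le]
      simp [finrank_euclideanSpace_fin, smul_eq_mul]
    have h2 : ∫ y, moll γ η y = η ^ (-(n:ℤ)) * ∫ y : EuclideanSpace ℝ (Fin n), γ (η⁻¹ • y) := by
      simp only [moll]
      rw [integral_const_mul]
    rw [h2, h1, hγint, mul_one, ← zpow_natCast η n, ← zpow_add₀ hη.ne']
    simp
  -- convolution representation and differentiability
  have hwcont : Continuous w := hwlip.continuous
  have hwli : LocallyIntegrable w volume := hwcont.locallyIntegrable
  set L : ℝ →L[ℝ] ℝ →L[ℝ] ℝ := ContinuousLinearMap.mul ℝ ℝ with hL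
  set k : EuclideanSpace ℝ (Fin n) → ℝ := fun u => moll γ η (-u) with hk
  have hk_cd : ContDiff ℝ 1 k := by
    have h1 : ContDiff ℝ 1 fun u : EuclideanSpace ℝ (Fin n) => η⁻¹ • (-u) :=
      (contDiff_id.neg).const_smul η⁻¹
    exact contDiff_const.mul ((hγsm.of_le (by simp)).comp h1)
  have hk_supp : HasCompactSupport k :=
    HasCompactSupport.intro (isCompact_closedBall (0 : EuclideanSpace ℝ (Fin n)) η)
      (fun u hu => hmoll_zero (-u) (by
        simpa [Metric.mem_closedBall, dist_zero_right, not_le] using hu))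
  have hconv_eq : mollify γ η w = MeasureTheory.convolution w k L volume := by
    funext z
    rw [MeasureTheory.convolution_def]
    have h1 := MeasureTheory.integral_add_left_eq_self
      (μ := (volume : Measure (EuclideanSpace ℝ (Fin n))))
      (fun t => w t * moll γ η (t - z)) z
    simp only [hL, ContinuousLinearMap.mul_apply', hk, neg_sub]
    rw [← h1]
    simp only [mollify]
    congr 1
    funext y
    have : z + y - z = y := by abel
    rw [this, mul_comm]
  have hdermoll : DifferentiableAt ℝ (mollify γ η w) x := by
    rw [hconv_eq]
    exact (HasCompactSupport.hasFDerivAt_convolution_right L hk_supp hwli hk_cd x).differentiableAt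
  -- gradient measurability, integrability of mollified gradient
  have hgrad_meas : Measurable (gradient w) := by
    exact ((InnerProductSpace.toDual ℝ
      (EuclideanSpace ℝ (Fin n))).symm.continuous.measurable).comp (measurable_fderiv ℝ w)
  have hF1 : Integrable (fun y => moll γ η y • gradient w (x + y)) := by
    refine Integrable.mono' (hmoll_int.mul_const M) ?_ ?_
    · exact ((hmoll_cont.measurable).smul
        (hgrad_meas.comp (measurable_id.const_add x))).aestronglyMeasurable
    · filter_upwards with y
      rw [norm_smul, Real.norm_eq_abs, abs_of_nonneg (hmoll_nonneg y)]
      exact mul_le_mul_of_nonneg_left (hDw _) (hmoll_nonneg y)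
  set q : EuclideanSpace ℝ (Fin n) := ∫ y, moll γ η y • gradient w (x + y) with hqdef
  -- a.e. differentiability after translation
  have hae : ∀ᵐ y : EuclideanSpace ℝ (Fin n), DifferentiableAt ℝ w (x + y) :=
    (measurePreserving_add_left volume x).quasiMeasurePreserving.ae
      (hwlip.ae_differentiableAt (μ := volume))
  -- test sequence
  set t : ℕ → ℝ := fun m => ((m : ℝ) + 1)⁻¹ with ht
  have htpos : ∀ m, 0 < t m := fun m => by positivity
  have hts : Filter.Tendsto t Filter.atTop (nhdsWithin (0:ℝ) {0}ᶜ) := by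
    apply tendsto_nhdsWithin_of_tendsto_nhds_of_eventually_within
    · simpa [ht, one_div] using tendsto_one_div_add_atTop_nhds_zero_nat (𝕜 := ℝ)
    · filter_upwards with m
      exact (htpos m).ne'
  -- slope of w along a line at differentiability points
  have hwslope : ∀ (z : EuclideanSpace ℝ (Fin n)) (v : EuclideanSpace ℝ (Fin n)),
      DifferentiableAt ℝ w z →
      Filter.Tendsto (fun m : ℕ => (t m)⁻¹ * (w (z + t m • v) - w z)) Filter.atTop
        (nhds (fderiv ℝ w z v)) := by
    intro z v hz
    have h1 : HasDerivAt (fun s : ℝ => z + s • v) v 0 := by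
      simpa using ((hasDerivAt_id (0 : ℝ)).smul_const v).const_add z
    have hz' : HasFDerivAt w (fderiv ℝ w z) ((fun s : ℝ => z + s • v) 0) := by
      simpa using hz.hasFDerivAt
    have hline : HasDerivAt (fun s : ℝ => w (z + s • v)) (fderiv ℝ w z v) 0 :=
      hz'.comp_hasDerivAt 0 h1
    have h2 := (hasDerivAt_iff_tendsto_slope.mp hline).comp hts
    simp only [Function.comp_def, slope_def_field] at h2
    refine h2.congr (fun m => ?_)
    simp only [zero_smul, add_zero, sub_zero]
    rw [div_eq_inv_mul]
  -- integrability of translated products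
  have hIm : ∀ z : EuclideanSpace ℝ (Fin n), Integrable (fun y => moll γ η y * w (z + y)) := by
    intro z
    exact (hmoll_cont.mul (hwcont.comp (continuous_const.add continuous_id))).integrable_of_hasCompactSupport
      (hmollCS.mul_right)
  have hwdist : ∀ a b : EuclideanSpace ℝ (Fin n), |w a - w b| ≤ M * ‖a - b‖ := by
    intro a b
    have := hwlip.dist_le_mul a b
    rwa [Real.dist_eq, dist_eq_norm, Real.coe_toNNReal M hM.le] at this
  have key : ∀ v : EuclideanSpace ℝ (Fin n), fderiv ℝ (mollify γ η w) x v
      = ∫ y, moll γ η y * fderiv ℝ w (x + y) v := by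
    intro v
    -- left side: slopes of the mollification converge to the derivative
    have h1 : HasDerivAt (fun s : ℝ => x + s • v) v 0 := by
      simpa using ((hasDerivAt_id (0 : ℝ)).smul_const v).const_add x
    have hx' : HasFDerivAt (mollify γ η w) (fderiv ℝ (mollify γ η w) x)
        ((fun s : ℝ => x + s • v) 0) := by
      simpa using hdermoll.hasFDerivAt
    have hline : HasDerivAt (fun s : ℝ => mollify γ η w (x + s • v))
        (fderiv ℝ (mollify γ η w) x v) 0 := hx'.comp_hasDerivAt (l := mollify γ η w) 0 h1
    have hslopeL : Filter.Tendsto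
        (fun m : ℕ => (t m)⁻¹ * (mollify γ η w (x + t m • v) - mollify γ η w x))
        Filter.atTop (nhds (fderiv ℝ (mollify γ η w) x v)) := by
      have h2 := (hasDerivAt_iff_tendsto_slope.mp hline).comp hts
      simp only [Function.comp_def, slope_def_field] at h2
      refine h2.congr (fun m => ?_)
      simp only [zero_smul, add_zero, sub_zero]
      rw [div_eq_inv_mul]
    -- slopes as integrals
    have hseq : ∀ m : ℕ, (t m)⁻¹ * (mollify γ η w (x + t m • v) - mollify γ η w x)
        = ∫ y, moll γ η y * ((t m)⁻¹ * (w (x + y + t m • v) - w (x + y))) := by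
      intro m
      rw [mollify, mollify, ← integral_sub (hIm _) (hIm _), ← integral_const_mul]
      congr 1
      funext y
      have : x + t m • v + y = x + y + t m • v := by abel
      rw [this]
      ring
    -- dominated convergence
    have hDCT : Filter.Tendsto
        (fun m : ℕ => ∫ y, moll γ η y * ((t m)⁻¹ * (w (x + y + t m • v) - w (x + y))))
        Filter.atTop (nhds (∫ y, moll γ η y * fderiv ℝ w (x + y) v)) := by
      apply tendsto_integral_of_dominated_convergence (fun y => moll γ η y * (M * ‖v‖))
      · intro m
        exact (hmoll_cont.mul (continuous_const.mul
          (((hwcont.comp ((continuous_const.add continuous_id).add continuous_const)).sub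
            (hwcont.comp (continuous_const.add continuous_id)))))).aestronglyMeasurable
      · exact hmoll_int.mul_const _
      · intro m
        filter_upwards with y
        rw [Real.norm_eq_abs, abs_mul, abs_of_nonneg (hmoll_nonneg y)]
        apply mul_le_mul_of_nonneg_left _ (hmoll_nonneg y)
        rw [abs_mul, abs_of_pos (inv_pos.2 (htpos m))]
        have hb := hwdist (x + y + t m • v) (x + y)
        have : x + y + t m • v - (x + y) = t m • v := by abel
        rw [this, norm_smul, Real.norm_eq_abs, abs_of_pos (htpos m)] at hb
        calc (t m)⁻¹ * |w (x + y + t m • v) - w (x + y)| ≤ (t m)⁻¹ * (M * (t m * ‖v‖)) := by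
              exact mul_le_mul_of_nonneg_left hb (inv_pos.2 (htpos m)).le
          _ = M * ‖v‖ := by field_simp [(htpos m).ne']
      · filter_upwards [hae] with y hy
        have := hwslope (x + y) v hy
        exact this.const_mul (moll γ η y) |>.congr (fun m => rfl)
    rw [show (fun m : ℕ => (t m)⁻¹ * (mollify γ η w (x + t m • v) - mollify γ η w x))
      = fun m : ℕ => ∫ y, moll γ η y * ((t m)⁻¹ * (w (x + y + t m • v) - w (x + y)))
      from funext hseq] at hslopeL
    exact tendsto_nhds_unique hslopeL hDCT
  -- identify the gradient
  have hinner_grad : ∀ (f : EuclideanSpace ℝ (Fin n) → ℝ) (z v : EuclideanSpace ℝ (Fin n)),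
      ⟪gradient f z, v⟫ = fderiv ℝ f z v := by
    intro f z v
    exact InnerProductSpace.toDual_symm_apply
  have hq : gradient (mollify γ η w) x = q := by
    apply ext_inner_right ℝ
    intro v
    rw [hinner_grad, key v, hqdef]
    rw [real_inner_comm, ← integral_inner hF1]
    congr 1
    funext y
    rw [real_inner_smul_right, real_inner_comm, hinner_grad]
  -- integrability of the two `H` integrands
  have hmeas2 : Measurable fun y => H x (gradient w (x + y)) :=
    hHcont.measurable.comp
      (measurable_const.prodMk (hgrad_meas.comp (measurable_id.const_add x)))
  have hmeas1 : Measurable fun y => H (x + y) (gradient w (x + y)) :=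
    hHcont.measurable.comp
      ((measurable_id.const_add x).prodMk (hgrad_meas.comp (measurable_id.const_add x)))
  have hIg2 : Integrable (fun y => moll γ η y * H x (gradient w (x + y))) := by
    refine Integrable.mono' (hmoll_int.mul_const K)
      ((hmoll_cont.measurable.mul hmeas2).aestronglyMeasurable) ?_
    filter_upwards with y
    rw [Real.norm_eq_abs, abs_mul, abs_of_nonneg (hmoll_nonneg y)]
    exact mul_le_mul_of_nonneg_left (hK x _ (hDw _)) (hmoll_nonneg y)
  have hIg1 : Integrable (fun y => moll γ η y * H (x + y) (gradient w (x + y))) := by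
    refine Integrable.mono' (hmoll_int.mul_const K)
      ((hmoll_cont.measurable.mul hmeas1).aestronglyMeasurable) ?_
    filter_upwards with y
    rw [Real.norm_eq_abs, abs_mul, abs_of_nonneg (hmoll_nonneg y)]
    exact mul_le_mul_of_nonneg_left (hK (x + y) _ (hDw _)) (hmoll_nonneg y)
  -- Jensen via the supporting hyperplane at `q`
  have hdp : DifferentiableAt ℝ (H x) q :=
    ((hH.differentiable one_ne_zero) (x, q)).comp q
      (((differentiable_const x).prodMk differentiable_id) q)
  set ξ := fderiv ℝ (H x) q with hξ
  have hsub : ∀ p, H x q + ξ (p - q) ≤ H x p := fun p =>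
    convex_subgrad (hconv x) hdp.hasFDerivAt p
  have hF4 : H x q ≤ ∫ y, moll γ η y * H x (gradient w (x + y)) := by
    have hInt_low : Integrable (fun y => moll γ η y * (H x q - ξ q)
        + ξ (moll γ η y • gradient w (x + y))) :=
      (hmoll_int.mul_const _).add (ξ.integrable_comp hF1)
    have hlow : (fun y => moll γ η y * (H x q - ξ q) + ξ (moll γ η y • gradient w (x + y)))
        ≤ fun y => moll γ η y * H x (gradient w (x + y)) := by
      intro y
      have h1 := hsub (gradient w (x + y))
      have h2 := mul_le_mul_of_nonneg_left h1 (hmoll_nonneg y)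
      calc moll γ η y * (H x q - ξ q) + ξ (moll γ η y • gradient w (x + y))
          = moll γ η y * (H x q + ξ (gradient w (x + y) - q)) := by
            rw [ξ.map_smul, ξ.map_sub]; simp only [smul_eq_mul]; ring
        _ ≤ moll γ η y * H x (gradient w (x + y)) := h2
    have hmono := integral_mono hInt_low hIg2 hlow
    rw [integral_add (hmoll_int.mul_const _) (ξ.integrable_comp hF1), integral_mul_const,
      hmoll_one, one_mul, ContinuousLinearMap.integral_comp_comm ξ hF1, ← hqdef] at hmono
    linarith
  -- shifting the `x` argument inside the integral
  have hF5 : (∫ y, moll γ η y * H x (gradient w (x + y)))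
      ≤ (∫ y, moll γ η y * H (x + y) (gradient w (x + y))) + (C₀ * (1 + K)) * η := by
    have hpt : (fun y => moll γ η y * H x (gradient w (x + y)))
        ≤ fun y => moll γ η y * H (x + y) (gradient w (x + y))
          + moll γ η y * ((C₀ * (1 + K)) * η) := by
      intro y
      by_cases h0 : moll γ η y = 0
      · simp [h0]
      · have hyn : ‖y‖ ≤ η := by
          by_contra hc
          exact h0 (hmoll_zero y (lt_of_not_ge hc))
        have hd := hshift x y (gradient w (x + y)) (hDw _)
        have h2 : H x (gradient w (x + y))
            ≤ H (x + y) (gradient w (x + y)) + (C₀ * (1 + K)) * η := by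
          have h3 := (abs_le.mp hd).1
          have h4 : (C₀ * (1 + K)) * ‖y‖ ≤ (C₀ * (1 + K)) * η := by
            apply mul_le_mul_of_nonneg_left hyn
            nlinarith
          linarith
        calc moll γ η y * H x (gradient w (x + y))
            ≤ moll γ η y * (H (x + y) (gradient w (x + y)) + (C₀ * (1 + K)) * η) :=
              mul_le_mul_of_nonneg_left h2 (hmoll_nonneg y)
          _ = _ := by ring
    have hmono := integral_mono hIg2 (hIg1.add (hmoll_int.mul_const _)) hpt
    simp only [Pi.add_apply] at hmono
    have hsplit : (∫ y, (moll γ η y * H (x + y) (gradient w (x + y))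
          + moll γ η y * ((C₀ * (1 + K)) * η)))
        = (∫ y, moll γ η y * H (x + y) (gradient w (x + y)))
          + ∫ y, moll γ η y * ((C₀ * (1 + K)) * η) :=
      integral_add hIg1 (hmoll_int.mul_const _)
    rw [hsplit, integral_mul_const, hmoll_one, one_mul] at hmono
    exact hmono
  calc H x (gradient (mollify γ η w) x) = H x q := by rw [hq]
    _ ≤ ∫ y, moll γ η y * H x (gradient w (x + y)) := hF4
    _ ≤ _ := hF5

end
end

section
/- Let $\mu$ be a Borel probability measure on $\mathbb{T}^n \times \mathbb{R}^n$ with $\int |v|\,d\mu < \infty$ satisfying the holonomy condition $\int (v \cdot D\varphi(x) - a(x)\Delta\varphi(x))\,d\mu(x,v) = 0$ for all $\varphi \in C^2(\mathbb{T}^n)$, and $\int L\,d\mu = 0$. Suppose for each $\eta > 0$ there exist $w^\eta \in C^2(\mathbb{T}^n)$ and continuous $S^\eta$ with $\|S^\eta\|_\infty \le C$, $S^\eta \to 0$ pointwise, and $H(x, Dw^\eta) \le a(x)\Delta w^\eta + S^\eta(x)$ on $\mathbb{T}^n$. Then $\mu$ minimizes $\int L\,d\mu'$ over all holonomic probability measures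 $\mu'$, i.e. $\int L\,d\mu' \ge 0$ for every holonomic $\mu'$ with $\int L^-\,d\mu' < \infty$. -/
/-!
Fenchel's inequality at `p = ∇w^η` and the subsolution inequality give, pointwise,
`L(x, v) ≥ v · ∇w^η(x) - a(x) Δw^η(x) - S^η(x)`. By periodicity `∇w^η` and `a Δw^η` are bounded,
so with `∫ |v| dμ' < ∞` the right side is integrable, and the holonomy condition for `w^η` kills
its first two terms: `∫ L dμ' ≥ -∫ S^η dμ'`. The bounded convergence theorem sends the right side
to `0` as `η → 0⁺`.
-/

open MeasureTheory Filter

noncomputable section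

def lap {n : ℕ} (f : EuclideanSpace ℝ (Fin n) → ℝ)
    (x : EuclideanSpace ℝ (Fin n)) : ℝ :=
  ∑ i : Fin n, fderiv ℝ (fun y => fderiv ℝ f y (EuclideanSpace.single i 1)) x
    (EuclideanSpace.single i 1)

/-- A probability measure on `𝕋ⁿ × ℝⁿ` is holonomic if
`∫ (v·Dφ − aΔφ) dμ = 0` for all `φ ∈ C²(𝕋ⁿ)`. -/
def Holonomic {n : ℕ} (a : EuclideanSpace ℝ (Fin n) → ℝ)
    (μ : Measure (EuclideanSpace ℝ (Fin n) × EuclideanSpace ℝ (Fin n))) : Prop :=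
  ∀ φ : EuclideanSpace ℝ (Fin n) → ℝ, ContDiff ℝ 2 φ → ZnPeriodic φ →
    ∫ q, ((inner ℝ q.2 (gradient φ q.1) : ℝ) - a q.1 * lap φ q.1) ∂μ = 0

section Holonomy

variable {n : ℕ}

local notation "𝔼" => EuclideanSpace ℝ (Fin n)

theorem ZnPeriodic.fderiv {F : Type*} [NormedAddCommGroup F] [NormedSpace ℝ F] {f : 𝔼 → F}
    (hf : ZnPeriodic f) : ZnPeriodic (fderiv ℝ f) := by
  intro x k
  rw [← fderiv_comp_add_right]
  simp only [hf _ k]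

theorem ZnPeriodic.gradient {f : 𝔼 → ℝ} (hf : ZnPeriodic f) : ZnPeriodic (gradient f) := fun x k =>
  congrArg (InnerProductSpace.toDual ℝ 𝔼).symm (hf.fderiv x k)

theorem ZnPeriodic.lap {f : 𝔼 → ℝ} (hf : ZnPeriodic f) : ZnPeriodic (lap f) := by
  intro x k
  refine Finset.sum_congr rfl fun i _ => ?_
  have hpartial : ZnPeriodic fun y => _root_.fderiv ℝ f y (EuclideanSpace.single i 1) :=
    fun y k' => DFunLike.congr_fun (hf.fderiv y k') _
  rw [hpartial.fderiv x k]

theorem ZnPeriodic.apply_fract {α : Type*} {f : 𝔼 → α} (hf : ZnPeriodic f) (x : 𝔼) :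
    f ((WithLp.equiv 2 (Fin n → ℝ)).symm fun i => Int.fract (x i)) = f x := by
  rw [← hf _ fun i => ⌊x i⌋]
  congr 1
  ext i
  exact Int.fract_add_floor (x i)

theorem ZnPeriodic.isCompact_range {α : Type*} [TopologicalSpace α] {f : 𝔼 → α} (hf : ZnPeriodic f)
    (hfc : Continuous f) : IsCompact (Set.range f) := by
  set cube : Set 𝔼 := (WithLp.equiv 2 (Fin n → ℝ)).symm '' Set.univ.pi fun _ => Set.Icc 0 1
  have hcube : IsCompact cube :=
    (isCompact_univ_pi fun _ => isCompact_Icc).image (PiLp.continuous_toLp 2 _)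
  have hrange : Set.range f = f '' cube := by
    refine (Set.range_subset_iff.2 fun x => ?_).antisymm (Set.image_subset_range f cube)
    exact ⟨_, ⟨_, fun i _ => ⟨Int.fract_nonneg _, (Int.fract_lt_one _).le⟩, rfl⟩, hf.apply_fract x⟩
  exact hrange ▸ hcube.image hfc

theorem ZnPeriodic.exists_norm_le {F : Type*} [NormedAddCommGroup F] {f : 𝔼 → F} (hf : ZnPeriodic f)
    (hfc : Continuous f) : ∃ M, ∀ x, ‖f x‖ ≤ M := by
  obtain ⟨M, hM⟩ := (hf.isCompact_range hfc).isBounded.exists_norm_le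
  exact ⟨M, fun x => hM _ ⟨x, rfl⟩⟩

theorem ContDiff.continuous_gradient {f : 𝔼 → ℝ} (hf : ContDiff ℝ 1 f) :
    Continuous (gradient f) :=
  (InnerProductSpace.toDual ℝ 𝔼).symm.continuous.comp (hf.continuous_fderiv one_ne_zero)

theorem ContDiff.continuous_lap {f : 𝔼 → ℝ} (hf : ContDiff ℝ 2 f) : Continuous (lap f) := by
  refine continuous_finsetSum _ fun i _ => ?_
  have hpartial : ContDiff ℝ 1 fun y => fderiv ℝ f y (EuclideanSpace.single i 1) :=
    (ContinuousLinearMap.apply ℝ ℝ _).contDiff.comp (hf.fderiv_right (by norm_num))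
  exact (ContinuousLinearMap.apply ℝ ℝ _).continuous.comp (hpartial.continuous_fderiv one_ne_zero)

variable {μ : Measure (EuclideanSpace ℝ (Fin n) × EuclideanSpace ℝ (Fin n))}

theorem integrable_inner_snd_of_norm_le {g : 𝔼 → 𝔼} (hg : Continuous g) {M : ℝ}
    (hM : ∀ x, ‖g x‖ ≤ M) (hv : Integrable (fun q => ‖q.2‖) μ) :
    Integrable (fun q => (inner ℝ q.2 (g q.1) : ℝ)) μ := by
  refine (hv.const_mul M).mono' ?_ (ae_of_all _ fun q => ?_)
  · exact (continuous_inner.comp (continuous_snd.prodMk (hg.comp continuous_fst))).aestronglyMeasurable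
  · calc ‖(inner ℝ q.2 (g q.1) : ℝ)‖ ≤ ‖q.2‖ * ‖g q.1‖ := norm_inner_le_norm _ _
      _ ≤ M * ‖q.2‖ := by rw [mul_comm]; exact mul_le_mul_of_nonneg_right (hM q.1) (norm_nonneg _)

theorem integrable_holonomy_integrand [IsFiniteMeasure μ] {a φ : 𝔼 → ℝ} (ha : Continuous a)
    (haper : ZnPeriodic a) (hφ : ContDiff ℝ 2 φ) (hφper : ZnPeriodic φ)
    (hv : Integrable (fun q => ‖q.2‖) μ) :
    Integrable (fun q => (inner ℝ q.2 (gradient φ q.1) : ℝ) - a q.1 * lap φ q.1) μ := by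
  have hgrad := (hφ.of_le (by norm_num)).continuous_gradient
  obtain ⟨M, hM⟩ := hφper.gradient.exists_norm_le hgrad
  have haLap : Continuous fun x => a x * lap φ x := ha.mul hφ.continuous_lap
  obtain ⟨M', hM'⟩ := ZnPeriodic.exists_norm_le
    (fun x k => by simp only [haper x k, hφper.lap x k]) haLap
  exact (integrable_inner_snd_of_norm_le hgrad hM hv).sub <|
    .of_bound (haLap.comp continuous_fst).aestronglyMeasurable M' (ae_of_all _ fun q => hM' q.1)

theorem Holonomic.neg_integral_le_integral_of_subsolution [IsFiniteMeasure μ]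
    {a : 𝔼 → ℝ} (hhol : Holonomic a μ) (ha : Continuous a) (haper : ZnPeriodic a)
    {H L : 𝔼 → 𝔼 → ℝ} (hfenchel : ∀ x v p, (inner ℝ p v : ℝ) - H x p ≤ L x v)
    (hv : Integrable (fun q => ‖q.2‖) μ) (hL : Integrable (fun q => L q.1 q.2) μ)
    {w s : 𝔼 → ℝ} (hw : ContDiff ℝ 2 w) (hwper : ZnPeriodic w) (hs : Continuous s) {C : ℝ}
    (hsC : ∀ x, |s x| ≤ C) (hsub : ∀ x, H x (gradient w x) ≤ a x * lap w x + s x) :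
    -∫ q, s q.1 ∂μ ≤ ∫ q, L q.1 q.2 ∂μ := by
  have hint := integrable_holonomy_integrand ha haper hw hwper hv
  have hs_int : Integrable (fun q => s q.1) μ :=
    .of_bound (hs.comp continuous_fst).aestronglyMeasurable C (ae_of_all _ fun q => hsC q.1)
  have hpointwise : ∀ q : 𝔼 × 𝔼,
      (inner ℝ q.2 (gradient w q.1) : ℝ) - a q.1 * lap w q.1 - s q.1 ≤ L q.1 q.2 := fun q => by
    linarith [hfenchel q.1 q.2 (gradient w q.1), hsub q.1, real_inner_comm q.2 (gradient w q.1)]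
  have hmono : ∫ q, ((inner ℝ q.2 (gradient w q.1) : ℝ) - a q.1 * lap w q.1 - s q.1) ∂μ ≤
      ∫ q, L q.1 q.2 ∂μ :=
    integral_mono (hint.sub hs_int) hL hpointwise
  rw [integral_sub hint hs_int, hhol w hw hwper] at hmono
  linarith

end Holonomy

theorem mather_measure_minimizes_general {n : ℕ}
    (H L : EuclideanSpace ℝ (Fin n) → EuclideanSpace ℝ (Fin n) → ℝ)
    (a : EuclideanSpace ℝ (Fin n) → ℝ)
    (ha : ContDiff ℝ 2 a) (haper : ZnPeriodic a)
    (hleg : ∀ x v, IsLUB {r : ℝ | ∃ p, r = inner ℝ p v - H x p} (L x v))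
    (W S : ℝ → EuclideanSpace ℝ (Fin n) → ℝ) (C : ℝ)
    (hW : ∀ η : ℝ, 0 < η → ContDiff ℝ 2 (W η) ∧ ZnPeriodic (W η))
    (hS : ∀ η : ℝ, 0 < η → Continuous (S η) ∧ ZnPeriodic (S η) ∧ ∀ x, |S η x| ≤ C)
    (hS0 : ∀ x, Tendsto (fun η => S η x) (nhdsWithin 0 (Set.Ioi 0)) (nhds 0))
    (hsub : ∀ η : ℝ, 0 < η → ∀ x,
      H x (gradient (W η) x) ≤ a x * lap (W η) x + S η x) :
    ∀ μ' : Measure (EuclideanSpace ℝ (Fin n) × EuclideanSpace ℝ (Fin n)),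
      IsProbabilityMeasure μ' → Integrable (fun q => ‖q.2‖) μ' →
      Holonomic a μ' → Integrable (fun q => L q.1 q.2) μ' →
      0 ≤ ∫ q, L q.1 q.2 ∂μ' := by
  intro μ' hμ' hμ'v hμ'hol hμ'L
  have hbound : ∀ᶠ η in nhdsWithin 0 (Set.Ioi 0),
      -∫ q, S η q.1 ∂μ' ≤ ∫ q, L q.1 q.2 ∂μ' :=
    eventually_nhdsWithin_of_forall fun η hη =>
      hμ'hol.neg_integral_le_integral_of_subsolution ha.continuous haper
        (fun x v p => (hleg x v).1 ⟨p, rfl⟩) hμ'v hμ'L (hW η hη).1 (hW η hη).2 (hS η hη).1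
        (hS η hη).2.2 (hsub η hη)
  have hlim : Tendsto (fun η => ∫ q, S η q.1 ∂μ') (nhdsWithin 0 (Set.Ioi 0)) (nhds 0) := by
    simpa using tendsto_integral_filter_of_norm_le_const (l := nhdsWithin (0 : ℝ) (Set.Ioi 0))
      (μ := μ') (f := fun _ => (0 : ℝ))
      (eventually_nhdsWithin_of_forall fun η hη =>
        ((hS η hη).1.comp continuous_fst).aestronglyMeasurable)
      ⟨C, eventually_nhdsWithin_of_forall fun η hη => ae_of_all _ fun q => (hS η hη).2.2 q.1⟩
      (ae_of_all _ fun q => hS0 q.1)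
  exact le_of_tendsto (by simpa using hlim.neg) hbound

/-- a holonomic probability measure `μ` with `∫ L dμ = 0`
minimizes the action over all holonomic probability measures, given the
approximate `C²` subsolutions `w^η` with errors `S^η → 0` pointwise and
uniformly bounded. -/
theorem mather_measure_minimizes {n : ℕ}
    (H L : EuclideanSpace ℝ (Fin n) → EuclideanSpace ℝ (Fin n) → ℝ)
    (a : EuclideanSpace ℝ (Fin n) → ℝ)
    (ha : ContDiff ℝ 2 a) (haper : ZnPeriodic a) (hapos : ∀ x, 0 ≤ a x)
    (hH : ContDiff ℝ 2 fun q : EuclideanSpace ℝ (Fin n) × EuclideanSpace ℝ (Fin n) =>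
      H q.1 q.2)
    (hHper : ∀ p, ZnPeriodic fun x => H x p)
    (hconv : ∀ x, ConvexOn ℝ Set.univ (H x))
    (hsuper : ∀ A : ℝ, ∃ R : ℝ, ∀ x p, R ≤ ‖p‖ → A * ‖p‖ ≤ H x p)
    (hleg : ∀ x v, IsLUB {r : ℝ | ∃ p, r = inner ℝ p v - H x p} (L x v))
    (μ : Measure (EuclideanSpace ℝ (Fin n) × EuclideanSpace ℝ (Fin n)))
    (hμ : IsProbabilityMeasure μ)
    (hμv : Integrable (fun q => ‖q.2‖) μ)
    (hμhol : Holonomic a μ)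
    (hμL : Integrable (fun q => L q.1 q.2) μ)
    (hμL0 : ∫ q, L q.1 q.2 ∂μ = 0)
    (W S : ℝ → EuclideanSpace ℝ (Fin n) → ℝ) (C : ℝ)
    (hW : ∀ η : ℝ, 0 < η → ContDiff ℝ 2 (W η) ∧ ZnPeriodic (W η))
    (hS : ∀ η : ℝ, 0 < η → Continuous (S η) ∧ ZnPeriodic (S η) ∧ ∀ x, |S η x| ≤ C)
    (hS0 : ∀ x, Tendsto (fun η => S η x) (nhdsWithin 0 (Set.Ioi 0)) (nhds 0))
    (hsub : ∀ η : ℝ, 0 < η → ∀ x,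
      H x (gradient (W η) x) ≤ a x * lap (W η) x + S η x) :
    ∀ μ' : Measure (EuclideanSpace ℝ (Fin n) × EuclideanSpace ℝ (Fin n)),
      IsProbabilityMeasure μ' → Integrable (fun q => ‖q.2‖) μ' →
      Holonomic a μ' → Integrable (fun q => L q.1 q.2) μ' →
      0 ≤ ∫ q, L q.1 q.2 ∂μ' :=
  mather_measure_minimizes_general H L a ha haper hleg W S C hW hS hS0 hsub

end
end
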